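/- For all 0 ≤ m ≤ n, the Krasnosel'skii–Mann iterates satisfy x_m − x_n = Σ_{j=0}^m Σ_{k=m+1}^n π_j^m π_k^n (T x_{j−1} − T x_{k−1}), where the term T x_{−1} is interpreted as x_0. -/

import Mathlib

/-!
Unrolling the recursion writes every iterate as an average `x_n = Σ_{k ≤ n} π_k^n y_k` of the
points `y_0 = x_0`, `y_k = T x_{k-1}` (here `π_k^n` is `weight α k n`), and restarting it at step `m` gives
`x_n = (∏_{m<i≤n} (1 - α_i)) x_m + Σ_{m<k≤n} π_k^n y_k`. Applied to the constant sequence `1`,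
the same identities say that the weights sum to one, so `x_m - x_n = Σ_{m<k≤n} π_k^n (x_m - y_k)`,
and expanding `x_m = Σ_{j ≤ m} π_j^m y_j` inside each bracket gives the double sum.
-/

open Finset

namespace KrasnoselskiiMann

variable {R M : Type*} [CommRing R] [AddCommGroup M] [Module R M]

def weight (α : ℕ → R) (k n : ℕ) : R :=
  α k * ∏ i ∈ Icc (k + 1) n, (1 - α i)

def IsMannMean (α : ℕ → R) (y x : ℕ → M) : Prop :=
  ∀ k, x (k + 1) = (1 - α (k + 1)) • x k + α (k + 1) • y (k + 1)

theorem isMannMean_one (α : ℕ → R) : IsMannMean α (1 : ℕ → R) 1 := fun k => by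
  simp only [Pi.one_apply, smul_eq_mul, mul_one, sub_add_cancel]

theorem weight_self (α : ℕ → R) (n : ℕ) : weight α n n = α n := by
  simp [weight]

theorem weight_succ_right (α : ℕ → R) {k n : ℕ} (hkn : k ≤ n) :
    weight α k (n + 1) = (1 - α (n + 1)) * weight α k n := by
  rw [weight, weight, ← insert_Icc_right_eq_Icc_add_one (by omega : k + 1 ≤ n + 1),
    prod_insert (by simp)]
  ring

theorem eq_prod_smul_add_sum_weight_smul {α : ℕ → R} {x y : ℕ → M} (hx : IsMannMean α y x)
    {m n : ℕ} (hmn : m ≤ n) :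
    x n = (∏ i ∈ Icc (m + 1) n, (1 - α i)) • x m + ∑ k ∈ Icc (m + 1) n, weight α k n • y k := by
  induction n, hmn using Nat.le_induction with
  | base => simp
  | succ n hmn ih =>
    have hIcc : Icc (m + 1) (n + 1) = insert (n + 1) (Icc (m + 1) n) :=
      (insert_Icc_right_eq_Icc_add_one (by omega)).symm
    have hweights : ∀ k ∈ Icc (m + 1) n,
        weight α k (n + 1) • y k = (1 - α (n + 1)) • weight α k n • y k := fun k hk => by
      rw [weight_succ_right α (mem_Icc.mp hk).2, smul_smul]
    rw [hx, ih, hIcc, prod_insert (by simp), sum_insert (by simp), weight_self,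
      sum_congr rfl hweights, ← smul_sum, smul_add, smul_smul]
    abel

theorem eq_sum_weight_smul {α : ℕ → R} (hα0 : α 0 = 1) {x y : ℕ → M} (hx : IsMannMean α y x)
    (hxy0 : x 0 = y 0) (n : ℕ) :
    x n = ∑ k ∈ range (n + 1), weight α k n • y k := by
  rw [eq_prod_smul_add_sum_weight_smul hx n.zero_le, range_eq_Ico,
    sum_eq_sum_Ico_succ_bot (by omega : 0 < n + 1), Ico_add_one_right_eq_Icc, hxy0, weight, hα0,
    one_mul]

theorem sum_weight_eq_one {α : ℕ → R} (hα0 : α 0 = 1) (n : ℕ) :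
    ∑ k ∈ range (n + 1), weight α k n = 1 := by
  simpa using (eq_sum_weight_smul hα0 (isMannMean_one α) rfl n).symm

theorem prod_add_sum_weight_eq_one (α : ℕ → R) {m n : ℕ} (hmn : m ≤ n) :
    ∏ i ∈ Icc (m + 1) n, (1 - α i) + ∑ k ∈ Icc (m + 1) n, weight α k n = 1 := by
  simpa using (eq_prod_smul_add_sum_weight_smul (isMannMean_one α) hmn).symm

theorem sum_smul_sub_eq_sub {ι : Type*} {s : Finset ι} {w : ι → R} (hw : ∑ i ∈ s, w i = 1)
    (v : ι → M) (u : M) : ∑ i ∈ s, w i • (v i - u) = ∑ i ∈ s, w i • v i - u := by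
  simp only [smul_sub, sum_sub_distrib, ← sum_smul, hw, one_smul]

theorem sub_eq_sum_weight_smul_sub {α : ℕ → R} {x y : ℕ → M} (hx : IsMannMean α y x)
    {m n : ℕ} (hmn : m ≤ n) :
    x m - x n = ∑ k ∈ Icc (m + 1) n, weight α k n • (x m - y k) := by
  rw [eq_prod_smul_add_sum_weight_smul hx hmn, eq_sub_of_add_eq (prod_add_sum_weight_eq_one α hmn)]
  simp only [smul_sub, sum_sub_distrib, ← sum_smul, sub_smul, one_smul]
  abel

theorem sub_eq_sum_sum_weight_mul_smul_sub {α : ℕ → R} (hα0 : α 0 = 1) {x y : ℕ → M}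
    (hx : IsMannMean α y x) (hxy0 : x 0 = y 0) {m n : ℕ} (hmn : m ≤ n) :
    x m - x n = ∑ j ∈ range (m + 1), ∑ k ∈ Icc (m + 1) n,
      (weight α j m * weight α k n) • (y j - y k) := by
  have hxm (k : ℕ) : x m - y k = ∑ j ∈ range (m + 1), weight α j m • (y j - y k) := by
    rw [sum_smul_sub_eq_sub (sum_weight_eq_one hα0 m), ← eq_sum_weight_smul hα0 hx hxy0]
  simp only [sub_eq_sum_weight_smul_sub hx hmn, hxm, smul_sum, smul_smul]
  rw [sum_comm]
  simp only [mul_comm]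

end KrasnoselskiiMann

open KrasnoselskiiMann in
theorem km_difference_formula
    {X : Type*} [NormedAddCommGroup X] [NormedSpace ℝ X]
    (T : X → X)
    (α : ℕ → ℝ) (hα0 : α 0 = 1)
    (x : ℕ → X)
    (hx : ∀ k, x (k + 1) = (1 - α (k + 1)) • x k + α (k + 1) • T (x k))
    (m n : ℕ) (hmn : m ≤ n) :
    x m - x n = ∑ j ∈ Finset.range (m + 1), ∑ k ∈ Finset.Icc (m + 1) n,
      ((α j * ∏ i ∈ Finset.Icc (j + 1) m, (1 - α i)) *
        (α k * ∏ i ∈ Finset.Icc (k + 1) n, (1 - α i))) •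
          ((if j = 0 then x 0 else T (x (j - 1))) - T (x (k - 1))) := by
  set y : ℕ → X := fun j => if j = 0 then x 0 else T (x (j - 1))
  have hmean : IsMannMean α y x := fun k => by simp [y, hx k]
  rw [sub_eq_sum_sum_weight_mul_smul_sub hα0 hmean rfl hmn]
  refine sum_congr rfl fun j _ => sum_congr rfl fun k hk => ?_
  have hk0 : k ≠ 0 := by have := (mem_Icc.mp hk).1; omega
  simp [weight, y, hk0]
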